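/- arXiv:2208.09962 — 4 statements merged into one kernel-verified Lean document; each statement's English description precedes it below -/
import Mathlib

section
/- For every function y : Fin d → Y there exists an element g of the wreath product H ≀ S_d such that, setting z := g • y, the following two properties hold: (i) for all i, j : Fin d, if z i and z j lie in the same H-orbit then z i = z j; and (ii) the stabilizer of y in H ≀ S_d equals the conjugate by g of the subgroup K := { (h, σ) | (∀ i, h i • z i = z i) ∧ (∀ i, z (σ i) = z i) }, i.e. the stabilizer of y is g⁻¹ K g. (Here K is the block subgroup ∏_j Stab_H(z_{i_j})^{δ_j} ⋊ S_{δ_j}, where δ_1, …, δ_k are the fibers of the map i ↦ z i.) -/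
/-! The wreath product `H ≀ S_d := (Fin d → H) ⋊ Equiv.Perm (Fin d)`, acting on
`Fin d → Y` for a left `H`-set `Y`. -/

/-- The action of `Equiv.Perm (Fin d)` on `Fin d → H` by `(σ • h) i = h (σ⁻¹ i)`,
as a monoid homomorphism into `MulAut (Fin d → H)`. -/
def permMulAut (H : Type*) [Group H] (d : ℕ) :
    Equiv.Perm (Fin d) →* MulAut (Fin d → H) where
  toFun σ :=
    { toFun := fun h i => h (σ⁻¹ i)
      invFun := fun h i => h (σ i)
      left_inv := fun h => by funext i; simp
      right_inv := fun h => by funext i; simp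
      map_mul' := fun h h' => rfl }
  map_one' := by ext h i; simp
  map_mul' := fun σ τ => by ext h i; simp [mul_inv_rev]

@[simp] theorem permMulAut_apply {H : Type*} [Group H] {d : ℕ}
    (σ : Equiv.Perm (Fin d)) (h : Fin d → H) (i : Fin d) :
    permMulAut H d σ h i = h (σ⁻¹ i) := rfl

/-- The wreath product `H ≀ S_d`, with multiplication
`(h, σ) * (h', σ') = (fun i => h i * h' (σ⁻¹ i), σ * σ')`. -/
abbrev WreathProduct (H : Type*) [Group H] (d : ℕ) :=
  SemidirectProduct (Fin d → H) (Equiv.Perm (Fin d)) (permMulAut H d)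

section Action

variable {H Y : Type*} [Group H] [MulAction H Y] {d : ℕ}

instance : SMul (WreathProduct H d) (Fin d → Y) :=
  ⟨fun g y i => g.left i • y (g.right⁻¹ i)⟩

@[simp] theorem WreathProduct.smul_apply (g : WreathProduct H d) (y : Fin d → Y) (i : Fin d) :
    (g • y) i = g.left i • y (g.right⁻¹ i) := rfl

/-- The wreath product `H ≀ S_d` acts on `Fin d → Y` by `((h, σ) • y) i = h i • y (σ⁻¹ i)`. -/
instance : MulAction (WreathProduct H d) (Fin d → Y) where
  one_smul y := by funext i; simp
  mul_smul a b y := by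
    funext i
    simp [SemidirectProduct.mul_left, SemidirectProduct.mul_right, mul_inv_rev, mul_smul]

end Action

/-- For every `y : Fin d → Y` there is an element `g` of the wreath product `H ≀ S_d`
such that, setting `z := g • y`: (i) coordinates of `z` lying in the same `H`-orbit are
equal; and (ii) the stabilizer of `y` in `H ≀ S_d` is the conjugate `g⁻¹ K g` of the
subgroup `K = {(h, σ) | (∀ i, h i • z i = z i) ∧ (∀ i, z (σ i) = z i)}`. -/
theorem exists_conj_stabilizer_eq_block_subgroup
    {H Y : Type*} [Group H] [MulAction H Y] {d : ℕ} (y : Fin d → Y) :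
    ∃ g : WreathProduct H d,
      (∀ i j : Fin d, (∃ h : H, h • (g • y) i = (g • y) j) → (g • y) i = (g • y) j) ∧
      (∀ w : WreathProduct H d, w ∈ MulAction.stabilizer (WreathProduct H d) y ↔
        ((∀ i : Fin d, (g * w * g⁻¹).left i • (g • y) i = (g • y) i) ∧
         (∀ i : Fin d, (g • y) ((g * w * g⁻¹).right i) = (g • y) i))) := by
  classical
  -- choose orbit representatives
  let r : Fin d → Y := fun i => (Quotient.mk (MulAction.orbitRel H Y) (y i)).out
  have hr : ∀ i, ∃ h : H, h • y i = r i := by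
    intro i
    have h0 : (MulAction.orbitRel H Y) (r i) (y i) :=
      Quotient.mk_out (s := MulAction.orbitRel H Y) (y i)
    obtain ⟨a, ha⟩ := MulAction.orbitRel_apply.mp h0
    exact ⟨a, ha⟩
  choose h hh using hr
  refine ⟨SemidirectProduct.inl h, ?_, ?_⟩
  · intro i j ⟨a, ha⟩
    have hzi : (SemidirectProduct.inl (φ := permMulAut H d) h • y) i = r i := by
      simp [hh]
    have hzj : (SemidirectProduct.inl (φ := permMulAut H d) h • y) j = r j := by
      simp [hh]
    rw [hzi, hzj] at ha ⊢
    -- r i and r j are in the same orbit, hence equal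
    have hij : (Quotient.mk (MulAction.orbitRel H Y) (y i))
        = (Quotient.mk (MulAction.orbitRel H Y) (y j)) := by
      have h1 : (MulAction.orbitRel H Y) (r i) (y i) :=
        Quotient.mk_out (s := MulAction.orbitRel H Y) (y i)
      have h2 : (MulAction.orbitRel H Y) (r j) (y j) :=
        Quotient.mk_out (s := MulAction.orbitRel H Y) (y j)
      have h3 : (MulAction.orbitRel H Y) (r i) (r j) := ⟨a⁻¹, by simp [← ha]⟩
      calc (Quotient.mk (MulAction.orbitRel H Y) (y i))
          = Quotient.mk _ (r i) := (Quotient.sound h1).symm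
        _ = Quotient.mk _ (r j) := Quotient.sound h3
        _ = Quotient.mk _ (y j) := Quotient.sound h2
    show r i = r j
    simp only [r, hij]
  · intro w
    set g := SemidirectProduct.inl (φ := permMulAut H d) h with hg
    set z := g • y with hz
    have hzr : ∀ i, z i = r i := by intro i; simp [hz, hg, hh]
    have horb : ∀ i j : Fin d, (∃ a : H, a • z i = z j) → z i = z j := by
      intro i j ⟨a, ha⟩
      rw [hzr i, hzr j] at ha ⊢
      have h1 : (MulAction.orbitRel H Y) (r i) (y i) :=
        Quotient.mk_out (s := MulAction.orbitRel H Y) (y i)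
      have h2 : (MulAction.orbitRel H Y) (r j) (y j) :=
        Quotient.mk_out (s := MulAction.orbitRel H Y) (y j)
      have h3 : (MulAction.orbitRel H Y) (r i) (r j) := ⟨a⁻¹, by simp [← ha]⟩
      have hij : (Quotient.mk (MulAction.orbitRel H Y) (y i))
          = (Quotient.mk (MulAction.orbitRel H Y) (y j)) := by
        calc (Quotient.mk (MulAction.orbitRel H Y) (y i))
            = Quotient.mk _ (r i) := (Quotient.sound h1).symm
          _ = Quotient.mk _ (r j) := Quotient.sound h3
          _ = Quotient.mk _ (y j) := Quotient.sound h2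
      simp only [r, hij]
    set w' := g * w * g⁻¹ with hw'
    have key : w • y = y ↔ w' • z = z := by
      constructor
      · intro hwy
        rw [hz, hw', mul_smul, mul_smul, inv_smul_smul, hwy]
      · intro hwz
        have hw : w = g⁻¹ * w' * g := by rw [hw']; group
        rw [hw, mul_smul, mul_smul, ← hz, hwz, hz, inv_smul_smul]
    rw [MulAction.mem_stabilizer_iff, key]
    constructor
    · intro hwz
      have hc : ∀ i, w'.left i • z (w'.right⁻¹ i) = z i := by
        intro i
        have := congrFun hwz i
        simpa using this
      have heq : ∀ i, z (w'.right⁻¹ i) = z i := by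
        intro i
        exact horb _ _ ⟨w'.left i, hc i⟩
      constructor
      · intro i
        have := hc i
        rwa [heq i] at this
      · intro i
        have := heq (w'.right i)
        simpa using this.symm
    · intro ⟨h1, h2⟩
      funext i
      have heq : z (w'.right⁻¹ i) = z i := by
        have := h2 (w'.right⁻¹ i)
        simpa using this.symm
      show w'.left i • z (w'.right⁻¹ i) = z i
      rw [heq]
      exact h1 i
end

section
/- Suppose y : Fin d → Y has the property that any two coordinates lying in the same H-orbit are equal, i.e. for all i, j : Fin d, if there exists h ∈ H with h • y i = y j, then y i = y j. Then the stabilizer of y under the wreath-product action of H ≀ S_d on Fin d → Y is exactly the set { (h, σ) | (∀ i, h i • y i = y i) ∧ (∀ i, y (σ i) = y i) }. -/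
namespace WreathProduct

variable {H Y : Type*} [Group H] [MulAction H Y] {d : ℕ}

theorem mem_stabilizer_iff_forall {w : WreathProduct H d} {y : Fin d → Y} :
    w ∈ MulAction.stabilizer (WreathProduct H d) y ↔ ∀ i, w.left i • y (w.right⁻¹ i) = y i := by
  rw [MulAction.mem_stabilizer_iff, funext_iff]
  rfl

end WreathProduct

theorem Equiv.Perm.forall_apply_eq_iff_forall_inv_apply_eq {α β : Type*} (y : α → β)
    (σ : Equiv.Perm α) : (∀ i, y (σ i) = y i) ↔ ∀ i, y (σ⁻¹ i) = y i := by
  conv_rhs => rw [← σ.forall_congr_right]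
  simp only [Equiv.Perm.coe_inv, Equiv.symm_apply_apply]
  exact forall_congr' fun _ => eq_comm

/-- If any two coordinates of `y : Fin d → Y` lying in the same `H`-orbit are equal, then
the stabilizer of `y` under the wreath-product action of `H ≀ S_d` on `Fin d → Y` is
exactly `{(h, σ) | (∀ i, h i • y i = y i) ∧ (∀ i, y (σ i) = y i)}`. -/
theorem mem_stabilizer_wreath_iff
    {H Y : Type*} [Group H] [MulAction H Y] {d : ℕ} (y : Fin d → Y)
    (hy : ∀ i j : Fin d, (∃ h : H, h • y i = y j) → y i = y j) :
    ∀ w : WreathProduct H d, w ∈ MulAction.stabilizer (WreathProduct H d) y ↔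
      ((∀ i : Fin d, w.left i • y i = y i) ∧ (∀ i : Fin d, y (w.right i) = y i)) := by
  intro w
  rw [WreathProduct.mem_stabilizer_iff_forall, Equiv.Perm.forall_apply_eq_iff_forall_inv_apply_eq]
  constructor
  · intro hw
    have hperm : ∀ i, y (w.right⁻¹ i) = y i := fun i => hy _ _ ⟨w.left i, hw i⟩
    exact ⟨fun i => hperm i ▸ hw i, hperm⟩
  · rintro ⟨hfix, hperm⟩ i
    rw [hperm, hfix]
end

section
/- An element of the commutative ring F ⊗[ℚ] Ω is integral over the subring F ⊗ 1 if and only if it belongs to the image of the canonical algebra map F ⊗[ℚ] ℚ̄ → F ⊗[ℚ] Ω; that is, the integral closure of F in F ⊗[ℚ] Ω equals the ℚ-subalgebra of F ⊗[ℚ] Ω generated by the pure tensors a ⊗ b with a ∈ F and b ∈ ℚ̄. -/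
/-!
A number field is étale over `ℚ`, and integral closure commutes with smooth base change
(`TensorProduct.toIntegralClosure_bijective_of_smooth`): the integral closure of `F` in
`F ⊗[ℚ] Ω` is `F ⊗[ℚ] ℚ̄`.
-/

open scoped TensorProduct

theorem TensorProduct.isIntegral_iff_mem_range_map_integralClosure
    {R S B : Type*} [CommRing R] [CommRing S] [Algebra R S] [CommRing B] [Algebra R B]
    [Algebra.Smooth R S] (x : S ⊗[R] B) :
    IsIntegral S x ↔
      x ∈ (Algebra.TensorProduct.map (AlgHom.id R S) (integralClosure R B).val).range := by
  constructor
  · intro hx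
    obtain ⟨y, hy⟩ := (toIntegralClosure_bijective_of_smooth (R := R) (S := S)).2 ⟨x, hx⟩
    exact ⟨y, congrArg Subtype.val hy⟩
  · rintro ⟨y, rfl⟩
    exact (toIntegralClosure R S B y).2

theorem Algebra.Etale.of_finiteDimensional_of_isSeparable (K L : Type*) [Field K] [Field L]
    [Algebra K L] [FiniteDimensional K L] [Algebra.IsSeparable K L] : Algebra.Etale K L :=
  ⟨Algebra.FormallyEtale.of_isSeparable K L,
    Algebra.FinitePresentation.of_finiteType.mp inferInstance⟩

/-- Let `Ω = ℚ̄_p` be an algebraic closure of `ℚ_p`, let `ℚ̄` be the algebraic closure of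
`ℚ` inside `Ω` (i.e. `integralClosure ℚ Ω`), and let `F` be a number field.  An element of
`F ⊗[ℚ] Ω` is integral over the subring `F ⊗ 1` (i.e. over `F`, acting through the left
tensor factor) if and only if it lies in the image of the canonical map
`F ⊗[ℚ] ℚ̄ → F ⊗[ℚ] Ω`. -/
theorem isIntegral_tensor_iff_mem_range_tensor_algebraicClosure
    (p : ℕ) [Fact p.Prime] (F : Type*) [Field F] [Algebra ℚ F] [FiniteDimensional ℚ F]
    (x : F ⊗[ℚ] (AlgebraicClosure ℚ_[p])) :
    IsIntegral F x ↔
      x ∈ (Algebra.TensorProduct.map (AlgHom.id ℚ F)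
        (integralClosure ℚ (AlgebraicClosure ℚ_[p])).val).range :=
  have := Algebra.Etale.of_finiteDimensional_of_isSeparable ℚ F
  TensorProduct.isIntegral_iff_mem_range_map_integralClosure x
end

section
/- If δ₁ and δ₂ are ring automorphisms of F ⊗[ℚ] Ω that both fix pointwise all elements a ⊗ algebraMap ℚ_p Ω c with a ∈ F and c ∈ ℚ_p, and which satisfy δ₁(a ⊗ b) = δ₂(a ⊗ b) for all a ∈ F and b ∈ ℚ̄, then δ₁ = δ₂. In other words, an F_p-linear automorphism of F ⊗[ℚ] Ω (where F_p := F ⊗[ℚ] ℚ_p) is uniquely determined by its restriction to the subring F ⊗[ℚ] ℚ̄. -/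
open scoped TensorProduct

open Polynomial Finset Module IntermediateField

attribute [local instance] Matrix.linftyOpNormedAddCommGroup Matrix.linftyOpNormedRing
  Matrix.linftyOpNormedSpace

section NewtonLemmas

variable {R : Type*} [NormedCommRing R]


/-- The two-variable difference-quotient of a polynomial, truncated at degree `N`. -/
noncomputable def gq (N : ℕ) (g : R[X]) (z z' : R) : R :=
  ∑ k ∈ Finset.range N, g.coeff k * ∑ i ∈ Finset.range k, z ^ i * z' ^ (k - 1 - i)

theorem gq_add (N : ℕ) (g h : R[X]) (z z' : R) :
    gq N (g + h) z z' = gq N g z z' + gq N h z z' := by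
  simp [gq, add_mul, Finset.sum_add_distrib]

theorem eval_sub_eq_gq {N : ℕ} {g : R[X]} (hdeg : g.natDegree < N) (z z' : R) :
    g.eval z - g.eval z' = (z - z') * gq N g z z' := by
  rw [eval_eq_sum_range' hdeg, eval_eq_sum_range' hdeg, gq, Finset.mul_sum,
    ← Finset.sum_sub_distrib]
  refine Finset.sum_congr rfl fun k _ => ?_
  have h := geom_sum₂_mul z z' k
  calc g.coeff k * z ^ k - g.coeff k * z' ^ k = g.coeff k * (z ^ k - z' ^ k) := by ring
    _ = (z - z') * (g.coeff k * ∑ i ∈ Finset.range k, z ^ i * z' ^ (k - 1 - i)) := by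
        rw [← h]; ring

theorem gq_self_eq_derivative {N : ℕ} {g : R[X]} (hdeg : g.natDegree < N) (x : R) :
    gq N g x x = g.derivative.eval x := by
  classical
  -- polynomial Γ with eval z Γ = gq N g z x
  set Γ : R[X] := ∑ k ∈ Finset.range N, C (g.coeff k) *
      ∑ i ∈ Finset.range k, X ^ i * C (x ^ (k - 1 - i)) with hΓ
  have hEval : ∀ z : R, Γ.eval z = gq N g z x := by
    intro z
    simp [hΓ, gq, eval_finset_sum]
  have hId : g - C (g.eval x) = (X - C x) * Γ := by
    rw [hΓ, Finset.mul_sum]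
    have : ∀ k ∈ Finset.range N, (X - C x) * (C (g.coeff k) *
        ∑ i ∈ Finset.range k, X ^ i * C (x ^ (k - 1 - i)))
        = C (g.coeff k) * X ^ k - C (g.coeff k) * C x ^ k := by
      intro k _
      have h := geom_sum₂_mul (X : R[X]) (C x) k
      have h2 : (∑ i ∈ Finset.range k, X ^ i * C (x ^ (k-1-i)))
          = ∑ i ∈ Finset.range k, (X:R[X]) ^ i * (C x) ^ (k - 1 - i) := by
        refine Finset.sum_congr rfl fun i _ => by rw [← C_pow]
      rw [h2]
      calc (X - C x) * (C (g.coeff k) * ∑ i ∈ Finset.range k, (X:R[X]) ^ i * (C x) ^ (k-1-i))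
          = C (g.coeff k) * ((∑ i ∈ Finset.range k, (X:R[X]) ^ i * (C x) ^ (k-1-i)) * (X - C x)) := by ring
        _ = C (g.coeff k) * (X ^ k - (C x) ^ k) := by rw [h]
        _ = C (g.coeff k) * X ^ k - C (g.coeff k) * C x ^ k := by ring
    rw [Finset.sum_congr rfl this, Finset.sum_sub_distrib]
    have h1 : ∑ k ∈ Finset.range N, C (g.coeff k) * X ^ k = g := by
      have := (as_sum_range' g N hdeg).symm
      simpa [C_mul_X_pow_eq_monomial] using this
    have h2 : ∑ k ∈ Finset.range N, C (g.coeff k) * C x ^ k = C (g.eval x) := by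
      rw [eval_eq_sum_range' hdeg]
      rw [map_sum]
      refine Finset.sum_congr rfl fun k _ => by rw [← C_pow, ← C_mul]
    rw [h1, h2]
  have hD : g.derivative = Γ + (X - C x) * Γ.derivative := by
    have := congrArg Polynomial.derivative hId
    simpa [derivative_mul] using this
  have := congrArg (Polynomial.eval x) hD
  simpa [hEval x] using this.symm

theorem newton [CompleteSpace R] {N : ℕ} (g : R[X]) (hdeg : g.natDegree < N)
    (x u : R) (r : ℝ) (hr : 0 < r)
    (hub : ∀ z z', z ∈ Metric.closedBall x r → z' ∈ Metric.closedBall x r →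
      ‖1 - u * gq N g z z'‖ ≤ 1/2)
    (hx : ‖u * g.eval x‖ ≤ r/2) :
    ∃ y ∈ Metric.closedBall x r, u * g.eval y = 0 := by
  have hxB : x ∈ Metric.closedBall x r := Metric.mem_closedBall_self hr.le
  set B := Metric.closedBall x r with hB
  haveI : CompleteSpace B := (Metric.isClosed_closedBall (x := x) (ε := r)).completeSpace_coe
  haveI : Nonempty B := ⟨⟨x, hxB⟩⟩
  have hstep : ∀ z z' : R, z ∈ B → z' ∈ B →
      ‖(z - u * g.eval z) - (z' - u * g.eval z')‖ ≤ (1/2) * ‖z - z'‖ := by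
    intro z z' hz hz'
    have key : (z - u * g.eval z) - (z' - u * g.eval z')
        = (z - z') * (1 - u * gq N g z z') := by
      have h := eval_sub_eq_gq hdeg z z'
      calc (z - u * g.eval z) - (z' - u * g.eval z')
          = (z - z') - u * (g.eval z - g.eval z') := by ring
        _ = (z - z') - u * ((z - z') * gq N g z z') := by rw [h]
        _ = (z - z') * (1 - u * gq N g z z') := by ring
    rw [key]
    calc ‖(z - z') * (1 - u * gq N g z z')‖ ≤ ‖z - z'‖ * ‖1 - u * gq N g z z'‖ := norm_mul_le _ _
      _ ≤ ‖z - z'‖ * (1/2) := by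
          exact mul_le_mul_of_nonneg_left (hub z z' hz hz') (norm_nonneg _)
      _ = (1/2) * ‖z - z'‖ := by ring
  have hmaps : ∀ z : R, z ∈ B → z - u * g.eval z ∈ B := by
    intro z hz
    rw [hB, Metric.mem_closedBall, dist_eq_norm]
    have e1 : (z - u * g.eval z) - x = ((z - u * g.eval z) - (x - u * g.eval x)) - u * g.eval x := by
      ring
    rw [e1]
    have h1 := hstep z x hz hxB
    have hzx : ‖z - x‖ ≤ r := by rw [← dist_eq_norm]; exact hz
    calc ‖_ - u * g.eval x‖ ≤ ‖(z - u * g.eval z) - (x - u * g.eval x)‖ + ‖u * g.eval x‖ :=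
          norm_sub_le _ _
      _ ≤ (1/2) * ‖z - x‖ + r/2 := add_le_add h1 hx
      _ ≤ (1/2) * r + r/2 := by nlinarith
      _ = r := by ring
  set φ : B → B := fun z => ⟨z.1 - u * g.eval z.1, hmaps z.1 z.2⟩ with hφ
  have hlip : LipschitzWith (1/2 : NNReal) φ := by
    apply LipschitzWith.of_dist_le_mul
    intro z z'
    have := hstep z.1 z'.1 z.2 z'.2
    simpa [hφ, Subtype.dist_eq, dist_eq_norm] using this
  have hcontr : ContractingWith (1/2 : NNReal) φ := ⟨by rw [← NNReal.coe_lt_coe]; norm_num, hlip⟩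
  set y := hcontr.fixedPoint φ with hy
  have hfix := hcontr.fixedPoint_isFixedPt
  refine ⟨(y : R), y.2, ?_⟩
  have := congrArg (Subtype.val) hfix
  simp only [hφ] at this
  have : (y : R) - u * g.eval (y : R) = (y : R) := this
  have h0 : u * g.eval (y : R) = 0 := by
    have := sub_eq_self.mp this
    exact this
  exact h0

end NewtonLemmas

private theorem rank_aux_lt (p : ℕ) [Fact p.Prime] (L : Type*) [Field L] [Algebra ℚ_[p] L]
    [FiniteDimensional ℚ_[p] L] (K K' : Subalgebra ℚ_[p] L) (h : K < K') :
    Module.finrank ℚ_[p] (Subalgebra.toSubmodule K)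
      < Module.finrank ℚ_[p] (Subalgebra.toSubmodule K') :=
  Submodule.finrank_lt_finrank_of_lt (Subalgebra.toSubmodule.lt_iff_lt.mpr h)

private theorem rank_aux_le (p : ℕ) [Fact p.Prime] (L : Type*) [Field L] [Algebra ℚ_[p] L]
    [FiniteDimensional ℚ_[p] L] (K : Subalgebra ℚ_[p] L) :
    Module.finrank ℚ_[p] (Subalgebra.toSubmodule K) ≤ Module.finrank ℚ_[p] L :=
  (Subalgebra.toSubmodule K).finrank_le

set_option maxHeartbeats 2000000 in
theorem mem_adjoin_integralClosure (p : ℕ) [Fact p.Prime]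
    (L : Type*) [Field L] [Algebra ℚ_[p] L] [FiniteDimensional ℚ_[p] L] [CharZero L] (x : L) :
    x ∈ Algebra.adjoin ℚ_[p] ((integralClosure ℚ L : Subalgebra ℚ L) : Set L) := by
  classical
  let bb : Basis (Fin (finrank ℚ_[p] L)) ℚ_[p] L := finBasis ℚ_[p] L
  let ρ := Algebra.leftMulMatrix bb
  letI : NormedRing L := NormedRing.induced L _ ρ.toRingHom (Algebra.leftMulMatrix_injective bb)
  letI : NormedCommRing L := { mul_comm := mul_comm }
  letI : NormedSpace ℚ_[p] L := ⟨by
    intro c a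
    change ‖ρ (c • a)‖ ≤ ‖c‖ * ‖a‖
    rw [map_smul]
    exact (norm_smul c (ρ a)).le⟩
  haveI : CompleteSpace L := FiniteDimensional.complete ℚ_[p] L
  suffices aux : ∀ n : ℕ, ∀ T : Finset L,
      (↑T ⊆ ((integralClosure ℚ L : Subalgebra ℚ L) : Set L)) →
      finrank ℚ_[p] L
        - finrank ℚ_[p] (Subalgebra.toSubmodule (Algebra.adjoin ℚ_[p] (T : Set L))) ≤ n →
      x ∈ Algebra.adjoin ℚ_[p] ((integralClosure ℚ L : Subalgebra ℚ L) : Set L) by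
    exact aux (finrank ℚ_[p] L) ∅ (by simp) (Nat.sub_le _ _)
  intro n
  induction n with
  | zero =>
    intro T hT hrk
    set K := Algebra.adjoin ℚ_[p] (T : Set L) with hK
    have h1 : finrank ℚ_[p] (Subalgebra.toSubmodule K) ≤ finrank ℚ_[p] L :=
      (Subalgebra.toSubmodule K).finrank_le
    have h2 : finrank ℚ_[p] (Subalgebra.toSubmodule K) = finrank ℚ_[p] L := by omega
    have h3 : Subalgebra.toSubmodule K = ⊤ := Submodule.eq_top_of_finrank_eq h2
    have hxK : x ∈ K := by
      have : x ∈ Subalgebra.toSubmodule K := h3 ▸ Submodule.mem_top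
      exact this
    exact Algebra.adjoin_mono hT hxK
  | succ n ih =>
    intro T hT hrk
    set K := Algebra.adjoin ℚ_[p] (T : Set L) with hK
    by_cases hxK : x ∈ K
    · exact Algebra.adjoin_mono hT hxK
    -- x ∉ K : the Newton step
    have hKclosed : IsClosed (K : Set L) := by
      have := Submodule.closed_of_finiteDimensional (Subalgebra.toSubmodule K)
      simpa using this
    have hKne : (K : Set L).Nonempty := ⟨0, K.zero_mem⟩
    have hd : 0 < Metric.infDist x (K : Set L) :=
      (hKclosed.notMem_iff_infDist_pos hKne).mp hxK
    set d := Metric.infDist x (K : Set L) with hdd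
    -- minimal polynomial data
    have hxint : IsIntegral ℚ_[p] x := IsIntegral.of_finite ℚ_[p] x
    set m := (minpoly ℚ_[p] x).natDegree with hmdef
    have hm : 0 < m := minpoly.natDegree_pos hxint
    have hmonic : (minpoly ℚ_[p] x).Monic := minpoly.monic hxint
    set N := m + 1 with hNdef
    set f : L[X] := (minpoly ℚ_[p] x).map (algebraMap ℚ_[p] L) with hfdef
    have hfmonic : f.Monic := hmonic.map _
    have hfdeg : f.natDegree = m := hmonic.natDegree_map _
    have hdegf : f.natDegree < N := by omega
    have hfx : f.eval x = 0 := by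
      rw [hfdef, eval_map, ← aeval_def, minpoly.aeval]
    -- derivative nonvanishing
    have hderiv : f.derivative.eval x ≠ 0 := by
      have hsep : (minpoly ℚ_[p] x).Separable := (minpoly.irreducible hxint).separable
      obtain ⟨a, b, hab⟩ := hsep
      have := congrArg (aeval x) hab
      simp only [map_add, map_mul, map_one, minpoly.aeval, mul_zero, zero_add] at this
      intro h0
      rw [hfdef, derivative_map, eval_map, ← aeval_def] at h0
      rw [h0, mul_zero] at this
      exact zero_ne_one this
    set c₀ := gq N f x x with hc₀def
    have hc₀ : c₀ ≠ 0 := by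
      rw [hc₀def, gq_self_eq_derivative hdegf]
      exact hderiv
    set u := c₀⁻¹ with hudef
    have hu : u * c₀ = 1 := inv_mul_cancel₀ hc₀
    have hune : u ≠ 0 := inv_ne_zero hc₀
    -- continuity of the quotient map
    have hGcont : Continuous (fun q : L × L => 1 - u * gq N f q.1 q.2) := by
      refine continuous_const.sub (continuous_const.mul ?_)
      refine continuous_finset_sum _ fun k _ => continuous_const.mul ?_
      exact continuous_finset_sum _ fun i _ => (continuous_fst.pow i).mul (continuous_snd.pow _)
    obtain ⟨δ, hδpos, hδ⟩ := Metric.continuous_iff.mp hGcont (x, x) (1/4) (by norm_num)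
    set r := min (δ/2) (d/2) with hrdef
    have hr0 : 0 < r := lt_min (by linarith) (by linarith)
    have hball : ∀ z z', z ∈ Metric.closedBall x r → z' ∈ Metric.closedBall x r →
        ‖1 - u * gq N f z z'‖ ≤ 1/4 := by
      intro z z' hz hz'
      have hzd : dist ((z, z') : L × L) (x, x) < δ := by
        rw [Prod.dist_eq]
        have h1 : dist z x ≤ r := hz
        have h2 : dist z' x ≤ r := hz'
        have : r < δ := by
          have : r ≤ δ/2 := min_le_left _ _
          linarith
        exact lt_of_le_of_lt (max_le h1 h2) this
      have := hδ (z, z') hzd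
      have hxx : (1:L) - u * gq N f x x = 0 := by rw [← hc₀def, sub_eq_zero, hu.symm]
      rw [hxx, dist_zero_right] at this
      exact this.le
    -- constants
    set B : ℝ := ‖x‖ + r + 1 with hBdef
    have hB1 : (1:ℝ) ≤ B := by
      have := norm_nonneg x
      simp only [hBdef]; linarith
    set C₁ : ℝ := max ‖(1:L)‖ 1 with hC₁def
    have hC1 : (1:ℝ) ≤ C₁ := le_max_right _ _
    set M : ℝ := (N:ℝ) * (C₁ * B ^ (2*N))^2 with hMdef
    have hCB1 : (1:ℝ) ≤ C₁ * B ^ (2*N) := by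
      have : (1:ℝ) ≤ B ^ (2*N) := one_le_pow₀ hB1
      nlinarith
    have hN1 : (1:ℝ) ≤ (N:ℕ) := by exact_mod_cast Nat.one_le_iff_ne_zero.mpr (by omega)
    have hM1 : (1:ℝ) ≤ M := by nlinarith
    have hMpos : (0:ℝ) < M := by linarith
    -- power bounds on the closed ball
    have hzB : ∀ z : L, z ∈ Metric.closedBall x r → ‖z‖ ≤ B := by
      intro z hz
      have h1 : ‖z - x‖ ≤ r := by rw [← dist_eq_norm]; exact hz
      have h2 : ‖z‖ ≤ ‖x‖ + ‖z - x‖ := by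
        calc ‖z‖ = ‖x + (z - x)‖ := by ring_nf
          _ ≤ ‖x‖ + ‖z - x‖ := norm_add_le _ _
      simp only [hBdef]; linarith
    have hpow : ∀ z : L, z ∈ Metric.closedBall x r → ∀ i : ℕ, i ≤ 2*N →
        ‖z ^ i‖ ≤ C₁ * B ^ (2*N) := by
      intro z hz i hi
      have key : ∀ j : ℕ, ‖z ^ j‖ ≤ C₁ * B ^ j := by
        intro j
        induction j with
        | zero => rw [pow_zero, pow_zero, mul_one]; exact le_max_left _ _
        | succ j hj =>
          have h1 : ‖z ^ (j+1)‖ ≤ ‖z ^ j‖ * ‖z‖ := by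
            rw [pow_succ]; exact norm_mul_le _ _
          have h2 : ‖z ^ j‖ * ‖z‖ ≤ (C₁ * B ^ j) * B := by
            have := hzB z hz
            have h3 := norm_nonneg (z ^ j)
            have h4 : (0:ℝ) ≤ C₁ * B ^ j := by positivity
            exact mul_le_mul hj this (norm_nonneg z) h4
          rw [pow_succ]
          calc ‖z^j * z‖ ≤ ‖z ^ j‖ * ‖z‖ := norm_mul_le _ _
            _ ≤ (C₁ * B ^ j) * B := h2
            _ = C₁ * B ^ (j+1) := by ring
      calc ‖z ^ i‖ ≤ C₁ * B ^ i := key i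
        _ ≤ C₁ * B ^ (2*N) := by
          have : B ^ i ≤ B ^ (2*N) := pow_le_pow_right₀ hB1 hi
          nlinarith
    -- bound for gq of a polynomial in terms of coefficient norms
    have hsumbound : ∀ q : L[X], ∀ z z', z ∈ Metric.closedBall x r → z' ∈ Metric.closedBall x r →
        ‖gq N q z z'‖ ≤ (∑ k ∈ Finset.range N, ‖q.coeff k‖) * M := by
      intro q z z' hz hz'
      calc ‖gq N q z z'‖ ≤ ∑ k ∈ Finset.range N, ‖q.coeff k * ∑ i ∈ Finset.range k,
            z ^ i * z' ^ (k-1-i)‖ := norm_sum_le _ _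
        _ ≤ ∑ k ∈ Finset.range N, ‖q.coeff k‖ * M := by
            refine Finset.sum_le_sum fun k hk => ?_
            have hkN : k ≤ N := (Finset.mem_range.mp hk).le
            have hin : ‖∑ i ∈ Finset.range k, z ^ i * z' ^ (k-1-i)‖ ≤ M := by
              calc ‖∑ i ∈ Finset.range k, z ^ i * z' ^ (k-1-i)‖
                  ≤ ∑ i ∈ Finset.range k, ‖z ^ i * z' ^ (k-1-i)‖ := norm_sum_le _ _
                _ ≤ ∑ _i ∈ Finset.range k, (C₁ * B ^ (2*N))^2 := by
                    refine Finset.sum_le_sum fun i hi => ?_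
                    have hi' : i ≤ 2*N := by
                      have := Finset.mem_range.mp hi; omega
                    have hj' : k - 1 - i ≤ 2*N := by omega
                    calc ‖z ^ i * z' ^ (k-1-i)‖ ≤ ‖z ^ i‖ * ‖z' ^ (k-1-i)‖ := norm_mul_le _ _
                      _ ≤ (C₁ * B ^ (2*N)) * (C₁ * B ^ (2*N)) := by
                          have h1 := hpow z hz i hi'
                          have h2 := hpow z' hz' (k-1-i) hj'
                          have h3 := norm_nonneg (z ^ i)
                          have h4 : (0:ℝ) ≤ C₁ * B ^ (2*N) := by positivity
                          exact mul_le_mul h1 h2 (norm_nonneg _) h4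
                      _ = (C₁ * B ^ (2*N))^2 := by ring
                _ = (k:ℝ) * (C₁ * B ^ (2*N))^2 := by
                    rw [Finset.sum_const, Finset.card_range, nsmul_eq_mul]
                _ ≤ M := by
                    rw [hMdef]
                    have hk' : (k:ℝ) ≤ (N:ℝ) := by exact_mod_cast hkN
                    nlinarith
            calc ‖q.coeff k * _‖ ≤ ‖q.coeff k‖ * ‖∑ i ∈ Finset.range k, z ^ i * z' ^ (k-1-i)‖ :=
                  norm_mul_le _ _
              _ ≤ ‖q.coeff k‖ * M := mul_le_mul_of_nonneg_left hin (norm_nonneg _)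
        _ = (∑ k ∈ Finset.range N, ‖q.coeff k‖) * M := by rw [Finset.sum_mul]
    -- bound for evaluation at x
    have hevalbound : ∀ q : L[X], q.natDegree < N →
        ‖q.eval x‖ ≤ (∑ k ∈ Finset.range N, ‖q.coeff k‖) * M := by
      intro q hq
      have hxball : x ∈ Metric.closedBall x r := Metric.mem_closedBall_self hr0.le
      rw [eval_eq_sum_range' hq]
      calc ‖∑ k ∈ Finset.range N, q.coeff k * x ^ k‖
          ≤ ∑ k ∈ Finset.range N, ‖q.coeff k * x ^ k‖ := norm_sum_le _ _
        _ ≤ ∑ k ∈ Finset.range N, ‖q.coeff k‖ * M := by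
            refine Finset.sum_le_sum fun k hk => ?_
            have hk' : k ≤ 2*N := by
              have := Finset.mem_range.mp hk; omega
            have h1 : ‖x ^ k‖ ≤ M := by
              calc ‖x ^ k‖ ≤ C₁ * B ^ (2*N) := hpow x hxball k hk'
                _ ≤ M := by rw [hMdef]; nlinarith
            calc ‖q.coeff k * x ^ k‖ ≤ ‖q.coeff k‖ * ‖x ^ k‖ := norm_mul_le _ _
              _ ≤ ‖q.coeff k‖ * M := mul_le_mul_of_nonneg_left h1 (norm_nonneg _)
        _ = _ := by rw [Finset.sum_mul]
    -- choose rational approximations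
    set ε₀ : ℝ := min (1/4) (r/2) / (‖u‖ * M + 1) with hε₀def
    have hden : (0:ℝ) < ‖u‖ * M + 1 := by positivity
    have hε₀ : 0 < ε₀ := div_pos (lt_min (by norm_num) (by linarith)) hden
    set η : ℝ := ε₀ / ((N:ℝ) * (‖(1:L)‖ + 1)) with hηdef
    have hden2 : (0:ℝ) < (N:ℝ) * (‖(1:L)‖ + 1) := by positivity
    have hη : 0 < η := div_pos hε₀ hden2
    have hqsall : ∀ k : ℕ, ∃ q : ℚ, ‖(minpoly ℚ_[p] x).coeff k - (q:ℚ_[p])‖ < η :=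
      fun k => Padic.rat_dense p ((minpoly ℚ_[p] x).coeff k) hη
    choose qs hqs using hqsall
    -- the rational polynomial
    set g₀ : ℚ[X] := X ^ m + ∑ j ∈ Finset.range m, C (qs j) * X ^ j with hg₀def
    have hg₀n : g₀.natDegree ≤ m := by
      refine (natDegree_add_le _ _).trans (max_le (by simp) ?_)
      refine natDegree_sum_le_of_forall_le _ _ fun j hj => ?_
      exact (natDegree_C_mul_le _ _).trans (by simp [Finset.mem_range.mp hj |>.le])
    have hg₀cm : g₀.coeff m = 1 := by
      rw [hg₀def, coeff_add, coeff_X_pow, if_pos rfl, finset_sum_coeff]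
      rw [Finset.sum_eq_zero, add_zero]
      intro j hj
      rw [coeff_C_mul_X_pow]
      exact if_neg (by have := Finset.mem_range.mp hj; omega)
    have hg₀monic : g₀.Monic := monic_of_natDegree_le_of_coeff_eq_one m hg₀n hg₀cm
    have hg₀c : ∀ k, k < m → g₀.coeff k = qs k := by
      intro k hk
      rw [hg₀def, coeff_add, coeff_X_pow, if_neg (by omega), zero_add, finset_sum_coeff]
      rw [Finset.sum_eq_single k]
      · rw [coeff_C_mul_X_pow, if_pos rfl]
      · intro j _ hj
        rw [coeff_C_mul_X_pow, if_neg (by omega)]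
      · intro hk'
        exact absurd (Finset.mem_range.mpr hk) hk'
    set g : L[X] := g₀.map (algebraMap ℚ L) with hgdef
    have hgdeg : g.natDegree < N := lt_of_le_of_lt (natDegree_map_le.trans hg₀n) (by omega)
    set e : L[X] := g - f with hedef
    have hedeg : e.natDegree < N :=
      lt_of_le_of_lt ((natDegree_sub_le _ _).trans
        (max_le (natDegree_map_le.trans hg₀n) (le_of_eq hfdeg))) (by omega)
    have hgfe : g = f + e := by rw [hedef]; ring
    have hec : ∀ k, k < m →
        e.coeff k = algebraMap ℚ_[p] L ((qs k : ℚ_[p]) - (minpoly ℚ_[p] x).coeff k) := by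
      intro k hk
      rw [hedef, coeff_sub, hgdef, coeff_map, hg₀c k hk, hfdef, coeff_map, map_sub]
      rw [eq_ratCast (algebraMap ℚ L) (qs k), map_ratCast (algebraMap ℚ_[p] L) (qs k)]
    have hem : e.coeff m = 0 := by
      rw [hedef, coeff_sub, hgdef, coeff_map, hg₀cm, map_one]
      have : f.coeff m = 1 := by
        rw [← hfdeg]; exact hfmonic.coeff_natDegree
      rw [this, sub_self]
    -- the sum of coefficient norms is small
    set Se : ℝ := ∑ k ∈ Finset.range N, ‖e.coeff k‖ with hSdef
    have hSe : Se ≤ ε₀ := by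
      rw [hSdef, hNdef, Finset.sum_range_succ, hem, norm_zero, add_zero]
      have step : ∀ k ∈ Finset.range m, ‖e.coeff k‖ ≤ η * ‖(1:L)‖ := by
        intro k hk
        have hk' := Finset.mem_range.mp hk
        rw [hec k hk', Algebra.algebraMap_eq_smul_one, norm_smul]
        have h1 : ‖(qs k : ℚ_[p]) - (minpoly ℚ_[p] x).coeff k‖ ≤ η := by
          rw [norm_sub_rev]; exact (hqs k).le
        exact mul_le_mul_of_nonneg_right h1 (norm_nonneg _)
      calc ∑ k ∈ Finset.range m, ‖e.coeff k‖ ≤ ∑ _k ∈ Finset.range m, η * ‖(1:L)‖ :=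
            Finset.sum_le_sum step
        _ = (m:ℝ) * (η * ‖(1:L)‖) := by rw [Finset.sum_const, Finset.card_range, nsmul_eq_mul]
        _ = η * ((m:ℝ) * ‖(1:L)‖) := by ring
        _ ≤ η * ((N:ℝ) * (‖(1:L)‖ + 1)) := by
            have hmN : (m:ℝ) ≤ (N:ℝ) := by exact_mod_cast (by omega : m ≤ N)
            have h1 : (m:ℝ) * ‖(1:L)‖ ≤ (N:ℝ) * (‖(1:L)‖ + 1) := by
              have := norm_nonneg (1:L)
              nlinarith
            exact mul_le_mul_of_nonneg_left h1 hη.le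
        _ = ε₀ := by rw [hηdef, div_mul_cancel₀ _ (ne_of_gt hden2)]
    have hkey : ‖u‖ * (Se * M) ≤ min (1/4) (r/2) := by
      have hSM : Se * M ≤ ε₀ * M := mul_le_mul_of_nonneg_right hSe hMpos.le
      calc ‖u‖ * (Se * M) ≤ ‖u‖ * (ε₀ * M) := mul_le_mul_of_nonneg_left hSM (norm_nonneg _)
        _ = ε₀ * (‖u‖ * M) := by ring
        _ ≤ ε₀ * (‖u‖ * M + 1) := by nlinarith
        _ = min (1/4) (r/2) := by rw [hε₀def, div_mul_cancel₀ _ (ne_of_gt hden)]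
    -- Newton hypotheses for g
    have hub : ∀ z z', z ∈ Metric.closedBall x r → z' ∈ Metric.closedBall x r →
        ‖1 - u * gq N g z z'‖ ≤ 1/2 := by
      intro z z' hz hz'
      have hadd : gq N g z z' = gq N f z z' + gq N e z z' := by
        rw [hgfe]; exact gq_add N f e z z'
      have e1 : (1:L) - u * gq N g z z' = (1 - u * gq N f z z') - u * gq N e z z' := by
        rw [hadd]; ring
      rw [e1]
      have h2 : ‖u * gq N e z z'‖ ≤ ‖u‖ * (Se * M) := by
        calc ‖u * gq N e z z'‖ ≤ ‖u‖ * ‖gq N e z z'‖ := norm_mul_le _ _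
          _ ≤ ‖u‖ * (Se * M) :=
              mul_le_mul_of_nonneg_left (hsumbound e z z' hz hz') (norm_nonneg _)
      have h3 : ‖u‖ * (Se * M) ≤ 1/4 := hkey.trans (min_le_left _ _)
      calc ‖(1 - u * gq N f z z') - u * gq N e z z'‖
          ≤ ‖1 - u * gq N f z z'‖ + ‖u * gq N e z z'‖ := norm_sub_le _ _
        _ ≤ 1/4 + 1/4 := add_le_add (hball z z' hz hz') (h2.trans h3)
        _ = 1/2 := by norm_num
    have hevx : ‖u * g.eval x‖ ≤ r/2 := by
      have hgx : g.eval x = e.eval x := by rw [hgfe, eval_add, hfx, zero_add]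
      rw [hgx]
      have h2 : ‖u * e.eval x‖ ≤ ‖u‖ * (Se * M) := by
        calc ‖u * e.eval x‖ ≤ ‖u‖ * ‖e.eval x‖ := norm_mul_le _ _
          _ ≤ ‖u‖ * (Se * M) :=
              mul_le_mul_of_nonneg_left (hevalbound e hedeg) (norm_nonneg _)
      exact h2.trans (hkey.trans (min_le_right _ _))
    -- apply Newton's method
    obtain ⟨y, hyball, hyroot⟩ := newton g hgdeg x u r hr0 hub hevx
    have hgy : g.eval y = 0 := by
      rcases mul_eq_zero.mp hyroot with h | h
      · exact absurd h hune
      · exact h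
    have hyIC : y ∈ ((integralClosure ℚ L : Subalgebra ℚ L) : Set L) := by
      rw [SetLike.mem_coe, mem_integralClosure_iff]
      refine ⟨g₀, hg₀monic, ?_⟩
      show eval₂ (algebraMap ℚ L) y g₀ = 0
      rw [eval₂_eq_eval_map]
      exact hgy
    have hyK : y ∉ K := by
      intro hyKmem
      have h1 : d ≤ dist x y := Metric.infDist_le_dist_of_mem hyKmem
      have h2 : dist x y ≤ r := by rw [dist_comm]; exact hyball
      have h3 : r ≤ d/2 := min_le_right _ _
      linarith
    -- conclude by induction
    have hyT : ((insert y T : Finset L) : Set L) ⊆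
        ((integralClosure ℚ L : Subalgebra ℚ L) : Set L) := by
      rw [Finset.coe_insert]
      exact Set.insert_subset hyIC hT
    have hKK' : K < Algebra.adjoin ℚ_[p] ((insert y T : Finset L) : Set L) := by
      refine lt_of_le_of_ne (Algebra.adjoin_mono ?_) ?_
      · rw [Finset.coe_insert]; exact Set.subset_insert _ _
      · intro hEq
        apply hyK
        have h2 : y ∈ Algebra.adjoin ℚ_[p] ((insert y T : Finset L) : Set L) :=
          Algebra.subset_adjoin (by simp)
        rw [← hEq] at h2
        exact h2
    have hfr := rank_aux_lt p L K (Algebra.adjoin ℚ_[p] ((insert y T : Finset L) : Set L)) hKK'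
    have hfr2 := rank_aux_le p L (Algebra.adjoin ℚ_[p] ((insert y T : Finset L) : Set L))
    exact ih (insert y T) hyT (by omega)


theorem omega_mem_adjoin (p : ℕ) [Fact p.Prime] (x : AlgebraicClosure ℚ_[p]) :
    x ∈ Algebra.adjoin ℚ_[p]
      ((integralClosure ℚ (AlgebraicClosure ℚ_[p]) :
          Subalgebra ℚ (AlgebraicClosure ℚ_[p])) : Set (AlgebraicClosure ℚ_[p])) := by
  have hxint : IsIntegral ℚ_[p] x := Algebra.IsIntegral.isIntegral x
  let L : IntermediateField ℚ_[p] (AlgebraicClosure ℚ_[p]) := ℚ_[p]⟮x⟯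
  haveI : FiniteDimensional ℚ_[p] L := IntermediateField.adjoin.finiteDimensional hxint
  haveI : CharZero L := charZero_of_injective_algebraMap (algebraMap ℚ_[p] L).injective
  set x' : L := IntermediateField.AdjoinSimple.gen ℚ_[p] x with hx'
  have hmem := mem_adjoin_integralClosure p L x'
  -- push forward along the inclusion
  set φ : L →ₐ[ℚ_[p]] (AlgebraicClosure ℚ_[p]) := L.val with hφ
  have hx'' : φ x' = x := IntermediateField.AdjoinSimple.algebraMap_gen ℚ_[p] x
  have himg : x ∈ (Algebra.adjoin ℚ_[p]
      ((integralClosure ℚ L : Subalgebra ℚ L) : Set L)).map φ :=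
    ⟨x', hmem, hx''⟩
  rw [AlgHom.map_adjoin] at himg
  refine Algebra.adjoin_mono ?_ himg
  rintro z ⟨b, hb, rfl⟩
  rw [SetLike.mem_coe, mem_integralClosure_iff] at hb ⊢
  obtain ⟨P, Pmonic, hP⟩ := hb
  refine ⟨P, Pmonic, ?_⟩
  show eval₂ (algebraMap ℚ (AlgebraicClosure ℚ_[p])) (φ b) P = 0
  have hcomp : (φ : L →+* (AlgebraicClosure ℚ_[p])).comp (algebraMap ℚ L)
      = algebraMap ℚ (AlgebraicClosure ℚ_[p]) := Subsingleton.elim _ _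
  have h2 : (φ : L →+* (AlgebraicClosure ℚ_[p])) (eval₂ (algebraMap ℚ L) b P) = 0 := by
    have := congrArg φ hP
    simpa using this
  rw [Polynomial.hom_eval₂, hcomp] at h2
  exact h2

/-- Let `Ω = ℚ̄_p` be an algebraic closure of `ℚ_p`, let `ℚ̄ = integralClosure ℚ Ω` be the
algebraic closure of `ℚ` inside `Ω`, and let `F` be a number field.  If `δ₁` and `δ₂` are
ring automorphisms of `F ⊗[ℚ] Ω` that both fix all elements `a ⊗ algebraMap ℚ_p Ω c`
(i.e. both are `F_p`-linear, `F_p = F ⊗[ℚ] ℚ_p`) and agree on all `a ⊗ b` with `b ∈ ℚ̄`,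
then `δ₁ = δ₂`. -/
theorem ringAut_ext_of_agree_on_algebraic
    (p : ℕ) [Fact p.Prime] (F : Type*) [Field F] [Algebra ℚ F] [FiniteDimensional ℚ F]
    (δ₁ δ₂ : (F ⊗[ℚ] (AlgebraicClosure ℚ_[p])) ≃+* (F ⊗[ℚ] (AlgebraicClosure ℚ_[p])))
    (h₁ : ∀ (a : F) (c : ℚ_[p]),
      δ₁ (a ⊗ₜ[ℚ] algebraMap ℚ_[p] (AlgebraicClosure ℚ_[p]) c)
        = a ⊗ₜ[ℚ] algebraMap ℚ_[p] (AlgebraicClosure ℚ_[p]) c)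
    (h₂ : ∀ (a : F) (c : ℚ_[p]),
      δ₂ (a ⊗ₜ[ℚ] algebraMap ℚ_[p] (AlgebraicClosure ℚ_[p]) c)
        = a ⊗ₜ[ℚ] algebraMap ℚ_[p] (AlgebraicClosure ℚ_[p]) c)
    (h : ∀ (a : F) (b : integralClosure ℚ (AlgebraicClosure ℚ_[p])),
      δ₁ (a ⊗ₜ[ℚ] (b : AlgebraicClosure ℚ_[p])) = δ₂ (a ⊗ₜ[ℚ] (b : AlgebraicClosure ℚ_[p]))) :
    δ₁ = δ₂ := by
  set Ω := AlgebraicClosure ℚ_[p]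
  -- the set of `o : Ω` on which `1 ⊗ ·` images agree forms a ℚ_p-subalgebra
  set S : Subalgebra ℚ_[p] Ω :=
    { carrier := {o : Ω | δ₁ ((1:F) ⊗ₜ[ℚ] o) = δ₂ ((1:F) ⊗ₜ[ℚ] o)}
      mul_mem' := by
        intro a b ha hb
        have key : ∀ (a b : Ω), (1:F) ⊗ₜ[ℚ] (a * b)
            = ((1:F) ⊗ₜ[ℚ] a) * ((1:F) ⊗ₜ[ℚ] b) := by
          intro a b
          rw [Algebra.TensorProduct.tmul_mul_tmul, one_mul]
        simp only [Set.mem_setOf_eq] at ha hb ⊢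
        rw [key, map_mul, map_mul, ha, hb]
      one_mem' := by
        have := (h₁ 1 1).trans (h₂ 1 1).symm
        simpa using this
      zero_mem' := by
        simp only [Set.mem_setOf_eq, TensorProduct.tmul_zero, map_zero]
      add_mem' := by
        intro a b ha hb
        simp only [Set.mem_setOf_eq] at ha hb ⊢
        rw [TensorProduct.tmul_add, map_add, map_add, ha, hb]
      algebraMap_mem' := by
        intro c
        simpa using (h₁ 1 c).trans (h₂ 1 c).symm } with hS
  have hsub : ((integralClosure ℚ Ω : Subalgebra ℚ Ω) : Set Ω) ⊆ (S : Set Ω) := by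
    intro b hb
    exact h 1 ⟨b, hb⟩
  have hall : ∀ o : Ω, δ₁ ((1:F) ⊗ₜ[ℚ] o) = δ₂ ((1:F) ⊗ₜ[ℚ] o) := by
    intro o
    have := Algebra.adjoin_le hsub (omega_mem_adjoin p o)
    exact this
  have htmul : ∀ (a : F) (o : Ω), δ₁ (a ⊗ₜ[ℚ] o) = δ₂ (a ⊗ₜ[ℚ] o) := by
    intro a o
    have e1 : a ⊗ₜ[ℚ] o = (a ⊗ₜ[ℚ] (1:Ω)) * ((1:F) ⊗ₜ[ℚ] o) := by
      rw [Algebra.TensorProduct.tmul_mul_tmul, mul_one, one_mul]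
    have e2 : δ₁ (a ⊗ₜ[ℚ] (1:Ω)) = a ⊗ₜ[ℚ] (1:Ω) := by
      simpa using h₁ a 1
    have e3 : δ₂ (a ⊗ₜ[ℚ] (1:Ω)) = a ⊗ₜ[ℚ] (1:Ω) := by
      simpa using h₂ a 1
    rw [e1, map_mul, map_mul, e2, e3, hall o]
  ext t
  induction t using TensorProduct.induction_on with
  | zero => rw [map_zero, map_zero]
  | tmul a o => exact htmul a o
  | add s t hs ht => rw [map_add, map_add, hs, ht]
end
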